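/- Let x be an N-position of Moore's NIM game NIM(n,k), and let D = min{ S(y) : x → y is a move and y is a P-position } be the minimum total number of stones remaining after a winning move from x. Then the Smith remoteness value satisfies R(x) = 1 + 2D/(k+1). -/

import Mathlib

/-- Smith's remoteness function for an impartial game with move relation `mv`. -/
def IsRemoteness {α : Type*} (mv : α → α → Prop) (R : α → ℕ) : Prop :=
  ∀ x : α,
    ((∀ y, ¬ mv x y) → R x = 0) ∧
    ((∃ y, mv x y ∧ Even (R y)) →
      ∃ y, mv x y ∧ Even (R y) ∧ R x = R y + 1 ∧ ∀ z, mv x z → Even (R z) → R y ≤ R z) ∧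
    ((∃ y, mv x y) → (∀ y, mv x y → ¬ Even (R y)) →
      ∃ y, mv x y ∧ R x = R y + 1 ∧ ∀ z, mv x z → R z ≤ R y)

/-- A move of Moore's NIM game NIM(n,k): strictly decrease the piles in some
nonempty set of at most `k` indices, leaving all other piles unchanged. -/
def MooreMove {ι : Type*} [Fintype ι] (k : ℕ) (x y : ι → ℕ) : Prop :=
  (∀ i, y i ≤ x i) ∧ y ≠ x ∧ (Finset.univ.filter fun i => y i < x i).card ≤ k

/-!
Moore's digit condition singles out a set of positions no move joins to itself and which every
other position can move into, so it is exactly the set of positions of even remoteness; the stone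
count of such a position is a multiple of `k + 1`. From a P-position `y`, a move followed by the
best reply loses at least `k + 1` stones, and removing one stone from a pile whose lowest binary
digit `1` is as low as possible forces every reply to lose at most `k + 1` (halve all piles and
induct). Hence `R y = 2 S(y) / (k + 1)`, and from `x` the winning move of smallest remoteness is
one to a P-position with the fewest stones.
-/

lemma Nat.exists_and_not_succ {P : ℕ → Prop} {N : ℕ} (h0 : P 0) (hN : ¬ P N) :
    ∃ t, P t ∧ ¬ P (t + 1) := by
  induction N with
  | zero => exact absurd h0 hN
  | succ N ih => by_cases hP : P N; exacts [⟨N, hP, hN⟩, ih hP]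

namespace IsRemoteness

variable {α : Type*} {mv : α → α → Prop} {R : α → ℕ}

lemma even_of_forall_not_even (hR : IsRemoteness mv R) {x : α}
    (h : ∀ y, mv x y → ¬ Even (R y)) : Even (R x) := by
  by_cases hmv : ∃ y, mv x y
  · obtain ⟨y, hxy, hRx, -⟩ := (hR x).2.2 hmv h
    exact hRx ▸ Nat.even_add_one.mpr (h y hxy)
  · push Not at hmv
    exact (hR x).1 hmv ▸ Even.zero

lemma not_even_of_even (hR : IsRemoteness mv R) {x y : α} (hx : Even (R x)) (hxy : mv x y) :
    ¬ Even (R y) := fun hy => by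
  obtain ⟨z, -, hz, hRx, -⟩ := (hR x).2.1 ⟨y, hxy, hy⟩
  exact Nat.even_add_one.mp (hRx ▸ hx) hz

lemma exists_even_of_not_even (hR : IsRemoteness mv R) {x : α} (hx : ¬ Even (R x)) :
    ∃ y, mv x y ∧ Even (R y) ∧ R x = R y + 1 ∧ ∀ z, mv x z → Even (R z) → R y ≤ R z := by
  refine (hR x).2.1 ?_
  by_contra! h
  exact hx (hR.even_of_forall_not_even h)

theorem even_iff (hR : IsRemoteness mv R) (hwf : WellFounded (flip mv)) {P : α → Prop}
    (hPP : ∀ x y, P x → P y → ¬ mv x y) (hNP : ∀ x, ¬ P x → ∃ y, mv x y ∧ P y) (x : α) :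
    Even (R x) ↔ P x := by
  induction x using hwf.induction with
  | _ x ih =>
  by_cases hx : P x
  · exact iff_of_true (hR.even_of_forall_not_even fun y hxy hy =>
      hPP x y hx ((ih y hxy).mp hy) hxy) hx
  · obtain ⟨y, hxy, hy⟩ := hNP x hx
    exact iff_of_false (hR.not_even_of_even · hxy ((ih y hxy).mpr hy)) hx

/-- `f` is a potential dropping by at least `c` over every move and reply between even
positions, and by at most `c` after a suitable move and any reply. -/
theorem eq_two_mul_div_of_even (hR : IsRemoteness mv R) (f : α → ℕ) {c : ℕ} (hc : 0 < c)
    (hf : ∀ x y, mv x y → f y < f x) (hdvd : ∀ x, Even (R x) → c ∣ f x)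
    (hterm : ∀ x, (∀ y, ¬ mv x y) → f x = 0)
    (hslow : ∀ x, Even (R x) → (∃ y, mv x y) →
      ∃ y, mv x y ∧ ∀ z, mv y z → Even (R z) → f x ≤ f z + c)
    {x : α} (hx : Even (R x)) : R x = 2 * (f x / c) := by
  induction hfx : f x using Nat.strong_induction_on generalizing x with
  | _ s ih =>
  subst hfx
  by_cases hmv : ∃ y, mv x y
  swap
  · push Not at hmv
    rw [(hR x).1 hmv, hterm x hmv, Nat.zero_div]
  have hreply : ∀ y, mv x y → ∃ z, mv y z ∧ Even (R z) ∧ R y = 2 * (f z / c) + 1 := by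
    intro y hxy
    obtain ⟨z, hyz, hz, hRy, -⟩ := hR.exists_even_of_not_even (hR.not_even_of_even hx hxy)
    exact ⟨z, hyz, hz, by rw [hRy, ih _ ((hf _ _ hyz).trans (hf _ _ hxy)) hz rfl]⟩
  have hupper : ∀ y, mv x y → R y + 1 ≤ 2 * (f x / c) := by
    intro y hxy
    obtain ⟨z, hyz, -, hRy⟩ := hreply y hxy
    have := Nat.div_lt_div_of_lt_of_dvd (hdvd x hx) ((hf _ _ hyz).trans (hf _ _ hxy))
    omega
  obtain ⟨y, hxy, hy⟩ := hslow x hx hmv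
  obtain ⟨z, hyz, hz, hRy⟩ := hreply y hxy
  have hlower : f x / c ≤ f z / c + 1 :=
    (Nat.div_le_div_right (hy z hyz hz)).trans_eq (Nat.add_div_right _ hc)
  obtain ⟨y₀, hxy₀, hRx, hmax⟩ := (hR x).2.2 hmv fun y => hR.not_even_of_even hx
  have := hupper y₀ hxy₀
  have := hmax y hxy
  omega

end IsRemoteness

namespace MooreNim

open Finset

def digit (j a : ℕ) : ℕ := a / 2 ^ j % 2

lemma div_two_pow_succ (a j : ℕ) : a / 2 ^ (j + 1) = a / 2 ^ j / 2 := by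
  rw [Nat.div_div_eq_div_mul, pow_succ]

lemma digit_succ (j a : ℕ) : digit (j + 1) a = digit j (a / 2) := by
  rw [digit, digit, Nat.div_div_eq_div_mul, pow_succ']

lemma digit_eq_of_div_eq {a b i m : ℕ} (h : a / 2 ^ i = b / 2 ^ i) (him : i ≤ m) :
    digit m a = digit m b := by
  obtain ⟨d, rfl⟩ := Nat.exists_eq_add_of_le him
  simp only [digit, pow_add, ← Nat.div_div_eq_div_mul, h]

variable {ι : Type*} [Fintype ι]

def digitSum (j : ℕ) (x : ι → ℕ) : ℕ := ∑ i, digit j (x i)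

/-- Moore's criterion for P-positions of NIM(n,k). -/
def IsPPosition (k : ℕ) (x : ι → ℕ) : Prop := ∀ j, (k + 1) ∣ digitSum j x

def halve (x : ι → ℕ) : ι → ℕ := fun i => x i / 2

lemma IsPPosition.halve {k : ℕ} {x : ι → ℕ} (h : IsPPosition k x) : IsPPosition k (halve x) :=
  fun j => by simpa only [digitSum, MooreNim.halve, digit_succ] using h (j + 1)

lemma sum_eq_two_mul_sum_halve_add_digitSum_zero (x : ι → ℕ) :
    ∑ i, x i = 2 * ∑ i, halve x i + digitSum 0 x := by
  simp only [halve, digitSum, digit, pow_zero, Nat.div_one, mul_sum, ← sum_add_distrib]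
  exact sum_congr rfl fun i _ => (Nat.div_add_mod (x i) 2).symm

lemma lt_two_pow_sum (x : ι → ℕ) (i : ι) : x i < 2 ^ ∑ i, x i :=
  (single_le_sum (fun _ _ => Nat.zero_le _) (mem_univ i)).trans_lt Nat.lt_two_pow_self

lemma IsPPosition.dvd_sum {k : ℕ} {x : ι → ℕ} (h : IsPPosition k x) : (k + 1) ∣ ∑ i, x i := by
  induction hs : ∑ i, x i using Nat.strong_induction_on generalizing x with
  | _ s ih =>
  obtain rfl | hpos := Nat.eq_zero_or_pos s
  · exact dvd_zero _
  have hdecomp := sum_eq_two_mul_sum_halve_add_digitSum_zero x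
  rw [← hs, hdecomp]
  exact dvd_add (dvd_mul_of_dvd_right (ih _ (by omega) h.halve rfl) 2) (h 0)

lemma MooreMove.sum_lt {k : ℕ} {x y : ι → ℕ} (h : MooreMove k x y) : ∑ i, y i < ∑ i, x i := by
  obtain ⟨i, hi⟩ := Function.ne_iff.mp h.2.1
  exact sum_lt_sum (fun i _ => h.1 i) ⟨i, mem_univ i, (h.1 i).lt_of_ne hi⟩

lemma mooreMove_update_pred [DecidableEq ι] {k : ℕ} (hk : 0 < k) {x : ι → ℕ} {i : ι}
    (hi : 0 < x i) : MooreMove k x (Function.update x i (x i - 1)) := by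
  refine ⟨fun p => ?_, fun h => ?_, ?_⟩
  · rcases eq_or_ne p i with rfl | hp
    · simp
    · simp [hp]
  · have := congrFun h i
    rw [Function.update_self] at this
    omega
  · refine (card_le_card (t := {i}) fun p => ?_).trans (by simpa using Nat.one_le_of_lt hk)
    rcases eq_or_ne p i with rfl | hp <;> simp [*]

/-- The digits of `y` and `w` agree above `j`, so they differ at `j` exactly where
`w i / 2 ^ j ≠ y i / 2 ^ j`, and there `y` has the digit `1`. -/
lemma digitSum_eq_add_card {w y : ι → ℕ} {j : ℕ} (hle : ∀ i, w i ≤ y i)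
    (htop : ∀ i, w i / 2 ^ (j + 1) = y i / 2 ^ (j + 1)) :
    digitSum j y = digitSum j w + #{i | w i / 2 ^ j ≠ y i / 2 ^ j} := by
  rw [digitSum, digitSum, card_filter, ← sum_add_distrib]
  refine sum_congr rfl fun i _ => ?_
  have h1 := htop i
  have h2 : w i / 2 ^ j ≤ y i / 2 ^ j := Nat.div_le_div_right (hle i)
  rw [div_two_pow_succ, div_two_pow_succ] at h1
  simp only [digit]
  split_ifs <;> omega

/-- Look at the highest binary digit in which some pile changes. -/
theorem IsPPosition.eq_of_le {k : ℕ} {x y : ι → ℕ} (hx : IsPPosition k x)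
    (hy : IsPPosition k y) (hle : ∀ i, y i ≤ x i) (hcard : #{i | y i < x i} ≤ k) : y = x := by
  by_contra hne
  obtain ⟨J, hJ, hJ1⟩ := Nat.exists_and_not_succ (P := fun j => ¬ ∀ i, y i / 2 ^ j = x i / 2 ^ j)
    (N := ∑ i, x i) (by simpa [funext_iff] using hne) (by
      push Not
      intro i
      rw [Nat.div_eq_of_lt (lt_two_pow_sum x i),
        Nat.div_eq_of_lt ((hle i).trans_lt (lt_two_pow_sum x i))])
  push Not at hJ hJ1
  have hsum := digitSum_eq_add_card hle hJ1
  have hdvd : (k + 1) ∣ #{i | y i / 2 ^ J ≠ x i / 2 ^ J} :=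
    (Nat.dvd_add_right (hy J)).mp (hsum ▸ hx J)
  have hpos : 0 < #{i | y i / 2 ^ J ≠ x i / 2 ^ J} := by
    obtain ⟨i, hi⟩ := hJ
    exact card_pos.mpr ⟨i, by simpa using hi⟩
  have hsub : univ.filter (fun i => y i / 2 ^ J ≠ x i / 2 ^ J) ⊆
      univ.filter (fun i => y i < x i) := by
    intro i
    simp only [mem_filter, mem_univ, true_and]
    exact fun h => (hle i).lt_of_ne fun e => h (e ▸ rfl)
  have := Nat.le_of_dvd hpos hdvd
  have := card_le_card hsub
  omega

lemma IsPPosition.not_mooreMove {k : ℕ} {x y : ι → ℕ} (hx : IsPPosition k x)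
    (hy : IsPPosition k y) : ¬ MooreMove k x y :=
  fun ⟨hle, hne, hcard⟩ => hne (hx.eq_of_le hy hle hcard)

lemma exists_subset_subset_dvd {α : Type*} (k : ℕ) (U A : Finset α) (hA : #A ≤ k) :
    ∃ M ⊆ U, ∃ T ⊆ A, #A + #M ≤ k ∧ (k + 1) ∣ #U - #M + #T := by
  by_cases h : #U % (k + 1) + #A ≤ k
  · obtain ⟨M, hMU, hM⟩ := exists_subset_card_eq (Nat.mod_le #U (k + 1))
    exact ⟨M, hMU, ∅, empty_subset _, by omega, by simpa [hM] using Nat.dvd_sub_mod #U⟩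
  · obtain ⟨T, hTA, hT⟩ := exists_subset_card_eq (show k + 1 - #U % (k + 1) ≤ #A by omega)
    refine ⟨∅, empty_subset _, T, hTA, by simpa using hA, #U / (k + 1) + 1, ?_⟩
    have := Nat.mod_add_div #U (k + 1)
    have := Nat.mod_lt #U (show 0 < k + 1 by omega)
    rw [card_empty, hT, Nat.sub_zero, mul_add, mul_one]
    omega

/-- One step of Moore's construction: the piles of `A` may be rewritten freely below digit
`j + 1`, and clearing digit `j` of the piles `M` makes the digit sum at `j` divisible. -/
lemma exists_adjust_digit [DecidableEq ι] (k j : ℕ) (x : ι → ℕ) (A : Finset ι) (hA : #A ≤ k) :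
    ∃ (x' : ι → ℕ) (M : Finset ι), Disjoint A M ∧ #A + #M ≤ k ∧ (k + 1) ∣ digitSum j x' ∧
      (∀ i, x' i / 2 ^ (j + 1) = x i / 2 ^ (j + 1)) ∧ (∀ i ∈ M, x' i / 2 ^ j < x i / 2 ^ j) ∧
      ∀ i, i ∉ A → i ∉ M → x' i = x i := by
  set U : Finset ι := {i | i ∉ A ∧ digit j (x i) = 1} with hU
  obtain ⟨M, hMU, T, hTA, hAM', hdvd⟩ := exists_subset_subset_dvd k U A hA
  have hAM : Disjoint A M := disjoint_right.mpr fun i hi => (mem_filter.mp (hMU hi)).2.1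
  have hUT : Disjoint (U \ M) T := disjoint_left.mpr fun i hi hiT =>
    (mem_filter.mp (mem_sdiff.mp hi).1).2.1 (hTA hiT)
  set x' : ι → ℕ := fun i =>
    if i ∈ A ∪ M then 2 ^ j * (2 * (x i / 2 ^ (j + 1)) + if i ∈ T then 1 else 0) else x i
  have hnew : ∀ i ∈ A ∪ M, x' i / 2 ^ j = 2 * (x i / 2 ^ (j + 1)) + if i ∈ T then 1 else 0 :=
    fun i hi => by simp only [x', if_pos hi, Nat.mul_div_cancel_left _ (Nat.two_pow_pos j)]
  have hout : ∀ i, i ∉ A → i ∉ M → x' i = x i := fun i hA hM => by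
    simp only [x', mem_union, hA, hM, or_self, if_false]
  have hdigit : ∀ i, digit j (x' i) = if i ∈ U \ M ∪ T then 1 else 0 := by
    intro i
    by_cases hi : i ∈ A ∪ M
    · have hiU : i ∈ U → i ∈ M := fun h => by
        simpa [(mem_filter.mp h).2.1] using mem_union.mp hi
      rw [digit, hnew i hi]
      by_cases hiT : i ∈ T
      · simp [hiT]
      · simpa [hiT, mem_sdiff] using hiU
    · simp only [mem_union, not_or] at hi
      have hiT : i ∉ T := fun h => hi.1 (hTA h)
      have hbit : digit j (x i) < 2 := Nat.mod_lt _ two_pos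
      rw [hout i hi.1 hi.2]
      by_cases h1 : digit j (x i) = 1
      · simp [hU, h1, hi.1, hi.2, hiT]
      · rw [show digit j (x i) = 0 by omega]
        simp [hU, h1, hi.2, hiT]
  refine ⟨x', M, hAM, hAM', ?_, fun i => ?_, fun i hi => ?_, hout⟩
  · rwa [digitSum, sum_congr rfl fun i _ => hdigit i, ← card_filter, filter_mem_eq_inter,
      univ_inter, card_union_of_disjoint hUT, card_sdiff_of_subset hMU]
  · by_cases hi : i ∈ A ∪ M
    · rw [div_two_pow_succ, hnew i hi]
      split_ifs <;> omega
    · simp only [mem_union, not_or] at hi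
      rw [hout i hi.1 hi.2]
  · have hdig := (mem_filter.mp (hMU hi)).2.2
    have hiT : i ∉ T := fun h => disjoint_right.mp hAM hi (hTA h)
    rw [hnew i (mem_union_right _ hi), if_neg hiT, div_two_pow_succ]
    simp only [digit] at hdig
    omega

theorem exists_isPPosition_of_dvd_digitSum [DecidableEq ι] (k : ℕ) :
    ∀ (j : ℕ) (x : ι → ℕ) (A : Finset ι), #A ≤ k → (∀ m, j ≤ m → (k + 1) ∣ digitSum m x) →
      ∃ y, IsPPosition k y ∧ (∀ i ∉ A, y i ≤ x i) ∧ #(A ∪ ({i | y i ≠ x i} : Finset ι)) ≤ k ∧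
        ∀ i ∈ A, y i / 2 ^ j = x i / 2 ^ j
  | 0, x, A, hA, hx => ⟨x, fun m => hx m m.zero_le, fun _ _ => le_rfl, by simpa using hA,
      fun _ _ => rfl⟩
  | j + 1, x, A, hA, hx => by
    obtain ⟨x', M, hAM, hcard, hdvd, htop, hM, hout⟩ := exists_adjust_digit k j x A hA
    obtain ⟨y, hy, hle, hcard', hlow⟩ := exists_isPPosition_of_dvd_digitSum k j x' (A ∪ M)
      (by rwa [card_union_of_disjoint hAM]) (by
        intro m hm
        rcases hm.eq_or_lt with rfl | hm
        · exact hdvd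
        · rw [digitSum, sum_congr rfl fun i _ => digit_eq_of_div_eq (htop i) hm]
          exact hx m hm)
    refine ⟨y, hy, fun i hi => ?_, (card_le_card fun i => ?_).trans hcard', fun i hi => ?_⟩
    · by_cases hiM : i ∈ M
      · exact (Nat.lt_of_div_lt_div ((hlow i (mem_union_right _ hiM)).trans_lt (hM i hiM))).le
      · rw [← hout i hi hiM]
        exact hle i (by simp [hi, hiM])
    · by_cases hi : i ∈ A ∨ i ∈ M
      · rcases hi with hi | hi <;> simp [hi]
      · simp only [not_or] at hi
        simp [hi, hout i hi.1 hi.2]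
    · rw [div_two_pow_succ, hlow i (mem_union_left _ hi), ← div_two_pow_succ, htop]

theorem exists_mooreMove_isPPosition (k : ℕ) {x : ι → ℕ} (hx : ¬ IsPPosition k x) :
    ∃ y, MooreMove k x y ∧ IsPPosition k y := by
  classical
  obtain ⟨y, hy, hle, hcard, -⟩ :=
    exists_isPPosition_of_dvd_digitSum k (∑ i, x i) x ∅ (Nat.zero_le k) fun m hm => by
      have : digitSum m x = 0 := sum_eq_zero fun i _ => by
        rw [digit, Nat.div_eq_of_lt ((lt_two_pow_sum x i).trans_le
          (Nat.pow_le_pow_right two_pos hm)), Nat.zero_mod]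
      rw [this]
      exact dvd_zero _
  refine ⟨y, ⟨fun i => hle i (notMem_empty i), fun h => hx (h ▸ hy), ?_⟩, hy⟩
  refine (card_le_card fun i => ?_).trans hcard
  simp only [mem_filter, mem_univ, true_and, empty_union]
  exact Nat.ne_of_lt

lemma filter_halve_lt_subset (w y : ι → ℕ) :
    univ.filter (fun p => halve w p < halve y p) ⊆ univ.filter (fun p => w p < y p) := by
  intro p hp
  rw [mem_filter] at hp ⊢
  exact ⟨hp.1, lt_of_not_ge fun h => hp.2.not_ge (Nat.div_le_div_right h)⟩

/-- The halves of `y` and `w` differ in at most `k` piles, none of them `i`, so they coincide. -/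
theorem sum_le_sum_add_of_odd [DecidableEq ι] {k : ℕ} {y w : ι → ℕ} {i : ι}
    (hy : IsPPosition k y) (hw : IsPPosition k w) (hle : ∀ p, w p ≤ y p)
    (hcard : #{p | w p < y p} ≤ k + 1) (hodd : ¬ 2 ∣ y i) (hwi : w i + 1 = y i) :
    ∑ p, y p ≤ ∑ p, w p + (k + 1) := by
  have hi : i ∈ univ.filter (fun p => w p < y p) := mem_filter.mpr ⟨mem_univ i, by omega⟩
  have hsub : univ.filter (fun p => halve w p < halve y p) ⊆
      (univ.filter fun p => w p < y p).erase i :=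
    subset_erase.mpr ⟨filter_halve_lt_subset w y, fun h => by
      have := (mem_filter.mp h).2
      simp only [halve] at this
      omega⟩
  have heq : halve w = halve y := hy.halve.eq_of_le hw.halve
    (fun p => Nat.div_le_div_right (hle p))
    ((card_le_card hsub).trans
      (by rw [card_erase_of_mem hi]; exact Nat.sub_le_iff_le_add.mpr hcard))
  calc ∑ p, y p ≤ ∑ p, (w p + if w p < y p then 1 else 0) := sum_le_sum fun p _ => by
        have h := congrFun heq p
        have := hle p
        simp only [halve] at h
        split_ifs <;> omega
    _ = ∑ p, w p + #{p | w p < y p} := by rw [sum_add_distrib, card_filter]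
    _ ≤ ∑ p, w p + (k + 1) := by omega

/-- Halving lowers `t`; once all piles of `y` are even, the odd pile `w i` forces
`k + 1 ≤ digitSum 0 w`, which pays for doubling the bound on the halves. -/
theorem sum_le_sum_add_of_pow_dvd [DecidableEq ι] {k : ℕ} :
    ∀ (t : ℕ) {y w : ι → ℕ} {i : ι}, IsPPosition k y → IsPPosition k w → (∀ p, w p ≤ y p) →
      #{p | w p < y p} ≤ k + 1 → (∀ p, 2 ^ t ∣ y p) → ¬ 2 ^ (t + 1) ∣ y i → w i + 1 = y i →
      ∑ p, y p ≤ ∑ p, w p + (k + 1)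
  | 0, _, _, _, hy, hw, hle, hcard, _, hodd, hwi =>
    sum_le_sum_add_of_odd hy hw hle hcard (by simpa using hodd) hwi
  | t + 1, y, w, i, hy, hw, hle, hcard, hdvd, hndvd, hwi => by
    have heven : ∀ p, 2 ∣ y p := fun p => (pow_dvd_pow 2 (Nat.le_add_left 1 t)).trans (hdvd p)
    have hhalf := sum_le_sum_add_of_pow_dvd t (i := i) hy.halve hw.halve
      (fun p => Nat.div_le_div_right (hle p))
      ((card_le_card (filter_halve_lt_subset w y)).trans hcard)
      (fun p => Nat.dvd_div_of_mul_dvd (by rw [← pow_succ']; exact hdvd p))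
      (fun h => hndvd (by rw [pow_succ']; exact Nat.mul_dvd_of_dvd_div (heven i) h))
      (by have := heven i; simp only [halve]; omega)
    have hy0 : digitSum 0 y = 0 := sum_eq_zero fun p _ => by
      simpa [digit] using Nat.mod_eq_zero_of_dvd (heven p)
    have hw0 : k + 1 ≤ digitSum 0 w := by
      refine Nat.le_of_dvd ?_ (hw 0)
      refine lt_of_lt_of_le ?_ (single_le_sum (f := fun p => digit 0 (w p))
        (fun _ _ => Nat.zero_le _) (mem_univ i))
      have := heven i
      simp only [digit, pow_zero, Nat.div_one]
      omega
    have := sum_eq_two_mul_sum_halve_add_digitSum_zero y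
    have := sum_eq_two_mul_sum_halve_add_digitSum_zero w
    omega

/-- Remove one stone from a pile whose lowest binary digit `1` is as low as possible. -/
theorem IsPPosition.exists_mooreMove_forall_sum_le [DecidableEq ι] {k : ℕ} (hk : 0 < k)
    {y : ι → ℕ} (hy : IsPPosition k y) (hne : y ≠ 0) :
    ∃ z, MooreMove k y z ∧ ∀ w, MooreMove k z w → IsPPosition k w →
      ∑ p, y p ≤ ∑ p, w p + (k + 1) := by
  obtain ⟨t, ht, i, hi⟩ : ∃ t, (∀ p, 2 ^ t ∣ y p) ∧ ∃ i, ¬ 2 ^ (t + 1) ∣ y i := by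
    obtain ⟨p, hp⟩ := Function.ne_iff.mp hne
    simpa using Nat.exists_and_not_succ (P := fun t => ∀ p, 2 ^ t ∣ y p) (by simp)
      fun h => hp (Nat.eq_zero_of_dvd_of_lt (h p) Nat.lt_two_pow_self)
  have hyi : 0 < y i := Nat.pos_of_ne_zero fun h => hi (h ▸ dvd_zero _)
  set z := Function.update y i (y i - 1)
  refine ⟨z, mooreMove_update_pred hk hyi, fun w ⟨hwz, _, hcard⟩ hw => ?_⟩
  have hzy : ∀ p, z p ≤ y p := (mooreMove_update_pred hk hyi).1
  have hsub : univ.filter (fun p => w p < y p) ⊆ insert i (univ.filter fun p => w p < z p) := by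
    intro p
    rcases eq_or_ne p i with rfl | hp
    · simp
    · simp [z, hp]
  have hwi : w i + 1 = y i := by
    by_contra h
    have hwzi : w i < z i := by have := hwz i; simp only [z, Function.update_self] at this ⊢; omega
    refine (hy.eq_of_le hw (fun p => (hwz p).trans (hzy p)) ?_ ▸ hwzi).not_ge (hzy i)
    refine (card_le_card fun p hp => ?_).trans hcard
    rcases mem_insert.mp (hsub hp) with rfl | hp'
    · simpa using hwzi
    · exact hp'
  exact sum_le_sum_add_of_pow_dvd t hy hw (fun p => (hwz p).trans (hzy p))
    ((card_le_card hsub).trans ((card_insert_le _ _).trans (by omega))) ht hi hwi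

variable {k : ℕ} {R : (ι → ℕ) → ℕ}

theorem even_iff (hR : IsRemoteness (MooreMove k) R) (x : ι → ℕ) :
    Even (R x) ↔ IsPPosition k x :=
  hR.even_iff (Subrelation.wf (fun h => MooreMove.sum_lt h) (measure fun x : ι → ℕ => ∑ i, x i).wf)
    (fun _ _ hx hy => hx.not_mooreMove hy) (fun _ hx => exists_mooreMove_isPPosition k hx) x

theorem remoteness_eq_of_even [DecidableEq ι] (hk : 0 < k) (hR : IsRemoteness (MooreMove k) R)
    {y : ι → ℕ} (hy : Even (R y)) : R y = 2 * ((∑ i, y i) / (k + 1)) :=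
  hR.eq_two_mul_div_of_even (fun x => ∑ i, x i) k.succ_pos (fun _ _ h => MooreMove.sum_lt h)
    (fun x hx => ((even_iff hR x).mp hx).dvd_sum)
    (fun x hx => sum_eq_zero fun i _ => by
      by_contra h
      exact hx _ (mooreMove_update_pred hk (Nat.pos_of_ne_zero h)))
    (fun x hx ⟨y, hle, hne, _⟩ => by
      have hx0 : x ≠ 0 := by
        rintro rfl
        exact hne (funext fun i => Nat.le_zero.mp (hle i))
      obtain ⟨z, hxz, hz⟩ := ((even_iff hR x).mp hx).exists_mooreMove_forall_sum_le hk hx0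
      exact ⟨z, hxz, fun w hzw hw => hz w hzw ((even_iff hR w).mp hw)⟩)
    hy

end MooreNim

theorem moore_remoteness_of_nposition_general (n k : ℕ) (hk : 0 < k)
    (R : (Fin n → ℕ) → ℕ) (hR : IsRemoteness (MooreMove k) R)
    (x : Fin n → ℕ) (D : ℕ)
    (hD1 : ∃ y, MooreMove k x y ∧ Even (R y) ∧ ∑ i, y i = D)
    (hD2 : ∀ y, MooreMove k x y → Even (R y) → D ≤ ∑ i, y i) :
    R x = 1 + 2 * D / (k + 1) := by
  obtain ⟨y, hxy, hy, rfl⟩ := hD1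
  obtain ⟨z, hxz, hz, hRx, hzy⟩ := (hR x).2.1 ⟨y, hxy, hy⟩
  have hRz : R z = R y := by
    refine le_antisymm (hzy y hxy hy) ?_
    rw [MooreNim.remoteness_eq_of_even hk hR hy, MooreNim.remoteness_eq_of_even hk hR hz]
    exact Nat.mul_le_mul_left 2 (Nat.div_le_div_right (hD2 z hxz hz))
  have hdvd := ((MooreNim.even_iff hR y).mp hy).dvd_sum
  rw [hRx, hRz, MooreNim.remoteness_eq_of_even hk hR hy, Nat.mul_div_assoc 2 hdvd, add_comm]

/-- If `x` is an N-position of Moore's NIM game NIM(n,k) and `D` is the minimum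
total number of stones remaining after a move from `x` to a P-position, then
`R x = 1 + 2 D / (k+1)`. -/
theorem moore_remoteness_of_nposition (n k : ℕ) (hk : 0 < k) (hkn : k ≤ n)
    (R : (Fin n → ℕ) → ℕ) (hR : IsRemoteness (MooreMove k) R)
    (x : Fin n → ℕ) (hx : ¬ Even (R x)) (D : ℕ)
    (hD1 : ∃ y, MooreMove k x y ∧ Even (R y) ∧ ∑ i, y i = D)
    (hD2 : ∀ y, MooreMove k x y → Even (R y) → D ≤ ∑ i, y i) :
    R x = 1 + 2 * D / (k + 1) :=
  moore_remoteness_of_nposition_general n k hk R hR x D hD1 hD2
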